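/- The one-dimensional subalgebras of A1 are exactly the subspaces ⟨e1⟩, ⟨e2⟩, and ⟨αe2 + e3⟩ for α ∈ ℂ. -/
import Mathlib


set_option linter.unreachableTactic false
set_option linter.unnecessarySeqFocus false
set_option linter.unusedTactic false

noncomputable section

/-- The underlying space of our 3-dimensional algebras. -/
abbrev V3 : Type := Fin 3 → ℂ
/-- Multiplication of the algebra `A1` (and of `S1`): in the basis `e1 = ![1,0,0]`,
`e2 = ![0,1,0]`, `e3 = ![0,0,1]`, the element `e1` is the unit and all
products among `e2, e3` vanish. -/
def A1mul : V3 →ₗ[ℂ] V3 →ₗ[ℂ] V3 :=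
  LinearMap.mk₂ ℂ (fun x y => ![x 0 * y 0, x 0 * y 1 + x 1 * y 0, x 0 * y 2 + x 2 * y 0])
    (fun x x' y => by funext k; fin_cases k <;> simp <;> ring)
    (fun a x y => by funext k; fin_cases k <;> simp <;> ring)
    (fun x y y' => by funext k; fin_cases k <;> simp <;> ring)
    (fun a x y => by funext k; fin_cases k <;> simp <;> ring)
/-- The basis vector `e1` (the unit). -/
def e1 : V3 := ![1, 0, 0]
/-- The basis vector `e2`. -/
def e2 : V3 := ![0, 1, 0]
/-- The basis vector `e3`. -/
def e3 : V3 := ![0, 0, 1]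

lemma A1mul_apply (x y : V3) :
    A1mul x y = ![x 0 * y 0, x 0 * y 1 + x 1 * y 0, x 0 * y 2 + x 2 * y 0] := rfl

lemma closure_span {v : V3} (h : A1mul v v ∈ Submodule.span ℂ {v}) :
    ∀ x ∈ Submodule.span ℂ {v}, ∀ y ∈ Submodule.span ℂ {v},
      A1mul x y ∈ Submodule.span ℂ {v} := by
  intro x hx y hy
  obtain ⟨c, rfl⟩ := Submodule.mem_span_singleton.mp hx
  obtain ⟨d, rfl⟩ := Submodule.mem_span_singleton.mp hy
  have : A1mul (c • v) (d • v) = (c * d) • A1mul v v := by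
    simp [LinearMap.map_smul₂, map_smul, smul_smul, mul_comm]
  rw [this]
  exact Submodule.smul_mem _ _ h

/-- **Theorem.** The one-dimensional subalgebras of `A1` are exactly `⟨e1⟩`,
`⟨e2⟩` and `⟨α e2 + e3⟩` for `α ∈ ℂ`. -/
theorem one_dim_subalgebras_of_A1 (W : Submodule ℂ V3) :
    ((∀ x ∈ W, ∀ y ∈ W, A1mul x y ∈ W) ∧ Module.finrank ℂ W = 1) ↔
      (W = Submodule.span ℂ {e1} ∨ W = Submodule.span ℂ {e2} ∨
        ∃ α : ℂ, W = Submodule.span ℂ {α • e2 + e3}) := by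
  constructor
  · rintro ⟨hc, hr⟩
    -- W is the span of a single nonzero vector v
    obtain ⟨v, hv0, hvspan⟩ := (finrank_eq_one_iff' (K := ℂ) (V := W)).mp hr
    have hvW : (v : V3) ∈ W := v.2
    have hW : W = Submodule.span ℂ {(v : V3)} := by
      apply le_antisymm
      · intro w hw
        obtain ⟨c, hc'⟩ := hvspan ⟨w, hw⟩
        rw [Submodule.mem_span_singleton]
        exact ⟨c, by simpa using congrArg (Subtype.val) hc'⟩
      · rw [Submodule.span_le, Set.singleton_subset_iff]; exact hvW
    have hvne : (v : V3) ≠ 0 := by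
      intro h
      exact hv0 (Subtype.ext h)
    obtain ⟨u, hune, hW⟩ : ∃ u : V3, (u ≠ 0 ∧ u ∈ W) ∧ W = Submodule.span ℂ {u} :=
      ⟨v, ⟨hvne, hvW⟩, hW⟩
    obtain ⟨hune, huW⟩ := hune
    have hmul : A1mul u u ∈ Submodule.span ℂ {u} := by
      rw [← hW]; exact hc u huW u huW
    obtain ⟨c, hcv⟩ := Submodule.mem_span_singleton.mp hmul
    have h0 := congrFun hcv 0
    have h1 := congrFun hcv 1
    have h2 := congrFun hcv 2
    simp [A1mul_apply] at h0 h1 h2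
    by_cases ha : u 0 = 0
    · -- v = (0, b, c)
      by_cases hb : u 2 = 0
      · -- v is a multiple of e2
        have hv1 : u 1 ≠ 0 := by
          intro h
          apply hune
          funext k; fin_cases k <;> simp [ha, hb, h]
        have : u = u 1 • e2 := by
          funext k; fin_cases k <;> simp [ha, hb, e2]
        right; left
        rw [hW, this]
        exact Submodule.span_singleton_smul_eq (isUnit_iff_ne_zero.mpr hv1) _
      · right; right
        refine ⟨u 1 / u 2, ?_⟩
        have : u = u 2 • (((u 1 / u 2) • e2) + e3) := by
          funext k
          fin_cases k <;> simp [ha, e2, e3] <;> field_simp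
        conv_lhs => rw [hW, this]
        exact Submodule.span_singleton_smul_eq (isUnit_iff_ne_zero.mpr hb) _
    · -- v is a multiple of e1
      have hcc : c = u 0 := h0.resolve_right ha
      subst hcc
      have hv1 : u 1 = 0 := by
        have : u 0 * u 1 = 0 := by linear_combination -h1
        rcases mul_eq_zero.mp this with h | h
        · exact absurd h ha
        · exact h
      have hv2 : u 2 = 0 := by
        have : u 0 * u 2 = 0 := by linear_combination -h2
        rcases mul_eq_zero.mp this with h | h
        · exact absurd h ha
        · exact h
      left
      have : u = u 0 • e1 := by
        funext k; fin_cases k <;> simp [hv1, hv2, e1]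
      rw [hW, this]
      exact Submodule.span_singleton_smul_eq (isUnit_iff_ne_zero.mpr ha) _
  · rintro (rfl | rfl | ⟨α, rfl⟩)
    · refine ⟨closure_span ?_, finrank_span_singleton ?_⟩
      · have : A1mul e1 e1 = e1 := by
          funext k; fin_cases k <;> simp [A1mul_apply, e1]
        rw [this]
        exact Submodule.mem_span_singleton_self _
      · intro h
        have := congrFun h 0
        simp [e1] at this
    · refine ⟨closure_span ?_, finrank_span_singleton ?_⟩
      · have : A1mul e2 e2 = 0 := by
          funext k; fin_cases k <;> simp [A1mul_apply, e2]
        rw [this]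
        exact Submodule.zero_mem _
      · intro h
        have := congrFun h 1
        simp [e2] at this
    · refine ⟨closure_span ?_, finrank_span_singleton ?_⟩
      · have : A1mul (α • e2 + e3) (α • e2 + e3) = 0 := by
          funext k; fin_cases k <;> simp [A1mul_apply, e2, e3]
        rw [this]
        exact Submodule.zero_mem _
      · intro h
        have := congrFun h 2
        simp [e2, e3] at this
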